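/- arXiv:1006.2106 — 3 statements merged into one kernel-verified Lean document; each statement's English description precedes it below -/
import Mathlib

section
/- Let p be an odd prime and let 0 ≤ a_1 ≤ a_2 ≤ a_3 be integers with a_1 + a_2 + a_3 odd. Then the density α_p(1_3, diag(p^{a_1}, p^{a_2}, p^{a_3})) exists and equals 0. -/
/-!
Taking determinants, a solution `x` of `ᵗx σ(x) ≡ T mod p^k` gives
`det x · σ(det x) ≡ p^(a₁+a₂+a₃) mod p^k`. Since `σ` preserves the `p`-adic valuation, a norm
`y σ(y)` has even valuation, so for `k > a₁ + a₂ + a₃` there are no solutions at all and the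
counts in the density are eventually `0`.
-/

open scoped BigOperators

noncomputable section

/-- `Z_{p²}`: the Witt vectors of the field with `p²` elements. -/
abbrev Zp2 (p : ℕ) [Fact p.Prime] : Type _ := WittVector p (GaloisField p 2)

/-- The quotient `Z_{p²}/p^k Z_{p²}`. -/
abbrev Qmod (p : ℕ) [Fact p.Prime] (k : ℕ) : Type _ :=
  Zp2 p ⧸ Ideal.span {(p : Zp2 p) ^ k}

/-- The Frobenius `σ` of `Z_{p²}` (the unique lift of `x ↦ x^p`), induced on the
quotient `Z_{p²}/p^k Z_{p²}`. -/
def sigmaQ (p : ℕ) [Fact p.Prime] (k : ℕ) : Qmod p k →+* Qmod p k :=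
  Ideal.quotientMap (Ideal.span {(p : Zp2 p) ^ k}) WittVector.frobenius
    (by
      rw [Ideal.span_le, Set.singleton_subset_iff]
      rw [SetLike.mem_coe, Ideal.mem_comap, map_pow, map_natCast]
      exact Ideal.subset_span (Set.mem_singleton _))

/-- The number of `x ∈ M_{m,l}(Z_{p²}/p^k)` with `ᵗx ⬝ S ⬝ σ(x) ≡ T mod p^k`. -/
def hermCount (p : ℕ) [Fact p.Prime] (m l k : ℕ)
    (S : Matrix (Fin m) (Fin m) (Zp2 p)) (T : Matrix (Fin l) (Fin l) (Zp2 p)) : ℕ :=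
  Nat.card {x : Matrix (Fin m) (Fin l) (Qmod p k) //
    x.transpose * S.map (Ideal.Quotient.mk (Ideal.span {(p : Zp2 p) ^ k})) * x.map (sigmaQ p k) =
      T.map (Ideal.Quotient.mk (Ideal.span {(p : Zp2 p) ^ k}))}

/-- "The hermitian representation density `α_p(S,T)` exists and equals `c`." -/
def alphaEq (p : ℕ) [Fact p.Prime] {m l : ℕ}
    (S : Matrix (Fin m) (Fin m) (Zp2 p)) (T : Matrix (Fin l) (Fin l) (Zp2 p)) (c : ℝ) : Prop :=
  Filter.Tendsto
    (fun k : ℕ => (hermCount p m l k S T : ℝ) / (p : ℝ) ^ (k * (l * (2 * m - l))))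
    Filter.atTop (nhds c)

namespace WittVector

variable {p : ℕ} [Fact p.Prime] {k : Type*} [Field k] [CharP k p] [PerfectRing k p]

theorem exists_mul_frobenius_eq_pow_two_mul_unit {y : WittVector p k} (hy : y ≠ 0) :
    ∃ (n : ℕ) (u : (WittVector p k)ˣ), y * frobenius y = (p : WittVector p k) ^ (2 * n) * u := by
  obtain ⟨n, u, rfl⟩ := exists_eq_pow_p_mul' y hy
  have hσu : IsUnit (frobenius (u : WittVector p k)) := u.isUnit.map frobenius
  refine ⟨n, u * hσu.unit, ?_⟩
  rw [map_mul, map_pow, map_natCast, Units.val_mul, IsUnit.unit_spec]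
  ring

theorem even_of_mul_frobenius_eq_pow_mul {y w : WittVector p k} {A : ℕ} (hw : IsUnit w)
    (h : y * frobenius y = (p : WittVector p k) ^ A * w) : Even A := by
  have hp : Irreducible (p : WittVector p k) := irreducible p
  have hy : y ≠ 0 := by
    rintro rfl
    rw [zero_mul, eq_comm] at h
    exact mul_ne_zero (pow_ne_zero A hp.ne_zero) hw.ne_zero h
  obtain ⟨n, u, hu⟩ := exists_mul_frobenius_eq_pow_two_mul_unit hy
  have h2n : u * (p : WittVector p k) ^ (2 * n) = hw.unit * (p : WittVector p k) ^ A := by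
    rw [IsUnit.unit_spec, mul_comm, ← hu, h, mul_comm]
  exact ⟨n, (IsDiscreteValuationRing.unit_mul_pow_congr_pow hp hp _ _ _ _ h2n).symm.trans
    (two_mul n)⟩

theorem not_pow_dvd_mul_frobenius_sub_pow (y : WittVector p k) {A n : ℕ} (hA : Odd A)
    (hAn : A < n) : ¬ (p : WittVector p k) ^ n ∣ y * frobenius y - (p : WittVector p k) ^ A := by
  rintro ⟨z, hz⟩
  have hw : IsUnit (1 + (p : WittVector p k) ^ (n - A) * z) := by
    rw [← sub_neg_eq_add]
    refine IsLocalRing.isUnit_one_sub_self_of_mem_nonunits _ fun hunit => ?_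
    have hdvd : (p : WittVector p k) ∣ -((p : WittVector p k) ^ (n - A) * z) :=
      (dvd_mul_of_dvd_left (dvd_pow_self _ (Nat.sub_ne_zero_of_lt hAn)) z).neg_right
    exact (irreducible p).not_isUnit (isUnit_of_dvd_unit hdvd hunit)
  refine Nat.not_even_iff_odd.mpr hA (even_of_mul_frobenius_eq_pow_mul (y := y) hw ?_)
  rw [mul_add, mul_one, ← mul_assoc, ← pow_add, Nat.add_sub_cancel' hAn.le]
  linear_combination hz

end WittVector

section HermCount

variable {p : ℕ} [Fact p.Prime]

theorem sigmaQ_mk {k : ℕ} (y : Zp2 p) :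
    sigmaQ p k (Ideal.Quotient.mk _ y) = Ideal.Quotient.mk _ (WittVector.frobenius y) :=
  Ideal.quotientMap_mk

theorem det_transpose_mul_map_sigmaQ {m k : ℕ} (x : Matrix (Fin m) (Fin m) (Qmod p k)) :
    (x.transpose * x.map (sigmaQ p k)).det = x.det * sigmaQ p k x.det := by
  rw [Matrix.det_mul, Matrix.det_transpose, RingHom.map_det]
  rfl

theorem hermCount_one_eq_zero {m k A : ℕ} (T : Matrix (Fin m) (Fin m) (Zp2 p))
    (hT : T.det = (p : Zp2 p) ^ A) (hA : Odd A) (hAk : A < k) : hermCount p m m k 1 T = 0 := by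
  rw [hermCount, Nat.card_eq_zero]
  refine Or.inl ⟨fun ⟨x, hx⟩ => ?_⟩
  rw [Matrix.map_one _ (map_zero _) (map_one _), mul_one] at hx
  have hdet := congrArg Matrix.det hx
  obtain ⟨y, hy⟩ := Ideal.Quotient.mk_surjective x.det
  rw [det_transpose_mul_map_sigmaQ, ← hy, sigmaQ_mk, ← map_mul, ← RingHom.mapMatrix_apply,
    ← RingHom.map_det, hT, Ideal.Quotient.eq, Ideal.mem_span_singleton] at hdet
  exact WittVector.not_pow_dvd_mul_frobenius_sub_pow y hA hAk hdet

theorem alphaEq_zero_of_eventually_hermCount_eq_zero {m l : ℕ}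
    {S : Matrix (Fin m) (Fin m) (Zp2 p)} {T : Matrix (Fin l) (Fin l) (Zp2 p)}
    (h : ∀ᶠ k in Filter.atTop, hermCount p m l k S T = 0) : alphaEq p S T 0 := by
  refine tendsto_const_nhds.congr' ?_
  filter_upwards [h] with k hk
  rw [hk, Nat.cast_zero, zero_div]

end HermCount

theorem alpha_three_vanishes_general (p : ℕ) [Fact p.Prime]
    (a₁ a₂ a₃ : ℕ) (hsum : Odd (a₁ + a₂ + a₃)) :
    alphaEq p (1 : Matrix (Fin 3) (Fin 3) (Zp2 p))
      (Matrix.diagonal ![(p : Zp2 p) ^ a₁, (p : Zp2 p) ^ a₂, (p : Zp2 p) ^ a₃])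
      (0 : ℝ) := by
  have hdet : (Matrix.diagonal ![(p : Zp2 p) ^ a₁, (p : Zp2 p) ^ a₂, (p : Zp2 p) ^ a₃]).det =
      (p : Zp2 p) ^ (a₁ + a₂ + a₃) := by
    rw [Matrix.det_diagonal, Fin.prod_univ_three, pow_add, pow_add]
    rfl
  refine alphaEq_zero_of_eventually_hermCount_eq_zero ?_
  filter_upwards [Filter.eventually_gt_atTop (a₁ + a₂ + a₃)] with k hk
  exact hermCount_one_eq_zero _ hdet hsum hk

/-- for an odd prime `p` and `0 ≤ a₁ ≤ a₂ ≤ a₃` with `a₁ + a₂ + a₃` odd,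
the density `α_p(1_3, diag(p^{a₁}, p^{a₂}, p^{a₃}))` exists and equals `0`. -/
theorem alpha_three_vanishes (p : ℕ) [Fact p.Prime] (hodd : Odd p)
    (a₁ a₂ a₃ : ℕ) (h12 : a₁ ≤ a₂) (h23 : a₂ ≤ a₃) (hsum : Odd (a₁ + a₂ + a₃)) :
    alphaEq p (1 : Matrix (Fin 3) (Fin 3) (Zp2 p))
      (Matrix.diagonal ![(p : Zp2 p) ^ a₁, (p : Zp2 p) ^ a₂, (p : Zp2 p) ^ a₃])
      (0 : ℝ) :=
  alpha_three_vanishes_general p a₁ a₂ a₃ hsum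
end
end

section
/- Let p be an odd prime (regarded as a real number) and let 0 ≤ a_1 ≤ a_2 ≤ a_3 be integers. Define Σ: ℝ → ℝ by Σ(X) = ∑_{k=0}^{a_1} ∑_{l=0}^{a_1+a_2−2k} (−1)^k · X^{k+l} · ( p^{2k+l} − p^{a_1+a_2−l}·X^{a_3+1} ), and define G(X) = ((1 + X/p³)(1 − X/p²)(1 + X/p)/(1 + X)) · Σ(X) for X ≠ −1. Then Σ(1) = 0, G is differentiable at X = 1, and −G′(1) = (1 + p^{−1})(1 − p^{−2})(1 + p^{−3}) · ( −(1/2) · ∑_{k=0}^{a_1} ∑_{l=0}^{a_1+a_2−2k} (−1)^k · ( (k+l)·p^{2k+l} − (k+l+a_3+1)·p^{a_1+a_2−l} ) ). -/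
open scoped BigOperators

noncomputable section

/-- The double sum `Σ(X)` of the paper's density polynomial for
`T = diag(p^{a₁}, p^{a₂}, p^{a₃})`. -/
def SigFun (P : ℝ) (a₁ a₂ a₃ : ℕ) (X : ℝ) : ℝ :=
  ∑ k ∈ Finset.range (a₁ + 1), ∑ l ∈ Finset.range (a₁ + a₂ - 2 * k + 1),
    (-1 : ℝ) ^ k * X ^ (k + l) * (P ^ (2 * k + l) - P ^ (a₁ + a₂ - l) * X ^ (a₃ + 1))

/-- The rational function `G(X) = ((1 + X/p³)(1 − X/p²)(1 + X/p)/(1 + X))·Σ(X)`. -/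
def GFun (P : ℝ) (a₁ a₂ a₃ : ℕ) (X : ℝ) : ℝ :=
  ((1 + X / P ^ 3) * (1 - X / P ^ 2) * (1 + X / P) / (1 + X)) * SigFun P a₁ a₂ a₃ X

/-!
At `X = 1` the inner sum of `Σ` pairs `p^{2k+l}` with `p^{a₁+a₂-l}`, and since `2k ≤ a₁ + a₂`
these are the same powers taken in reverse order as `l` runs over `0, …, a₁+a₂-2k`; so `Σ(1) = 0`.
In the product rule for `G = F·Σ` the term `F′(1)·Σ(1)` therefore drops out, leaving
`G′(1) = F(1)·Σ′(1)` with `F(1) = (1+p⁻¹)(1−p⁻²)(1+p⁻³)/2`.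
-/

theorem Finset.sum_range_succ_reflect_add {M : Type*} [AddCommMonoid M] (f : ℕ → M)
    (m n : ℕ) :
    ∑ l ∈ Finset.range (n + 1), f (m + n - l) = ∑ l ∈ Finset.range (n + 1), f (m + l) := by
  rw [← Finset.sum_range_reflect (fun l => f (m + l))]
  refine Finset.sum_congr rfl fun l hl => ?_
  have hl_lt := Finset.mem_range.mp hl
  congr 1
  omega

theorem DifferentiableAt.hasDerivAt_mul_of_eq_zero {𝕜 : Type*} [NontriviallyNormedField 𝕜]
    {f g : 𝕜 → 𝕜} {g' x : 𝕜} (hf : DifferentiableAt 𝕜 f x) (hg : HasDerivAt g g' x) (hgx : g x = 0) :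
    HasDerivAt (fun y => f y * g y) (f x * g') x := by
  have hprod := hf.hasDerivAt.mul hg
  rwa [hgx, mul_zero, zero_add] at hprod

theorem sigFun_one {P : ℝ} {a₁ a₂ : ℕ} (a₃ : ℕ) (h12 : a₁ ≤ a₂) :
    SigFun P a₁ a₂ a₃ 1 = 0 := by
  refine Finset.sum_eq_zero fun k hk_mem => ?_
  have hk : 2 * k ≤ a₁ + a₂ := by
    have hk_lt := Finset.mem_range.mp hk_mem
    omega
  have hreflect := Finset.sum_range_succ_reflect_add (P ^ ·) (2 * k) (a₁ + a₂ - 2 * k)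
  rw [Nat.add_sub_cancel' hk] at hreflect
  simp only [one_pow, mul_one]
  rw [← Finset.mul_sum, Finset.sum_sub_distrib, hreflect, sub_self, mul_zero]

theorem hasDerivAt_sigFun_one (P : ℝ) (a₁ a₂ a₃ : ℕ) :
    HasDerivAt (SigFun P a₁ a₂ a₃)
      (∑ k ∈ Finset.range (a₁ + 1), ∑ l ∈ Finset.range (a₁ + a₂ - 2 * k + 1),
        (-1 : ℝ) ^ k *
          (((k : ℝ) + l) * P ^ (2 * k + l) - ((k : ℝ) + l + a₃ + 1) * P ^ (a₁ + a₂ - l))) 1 := by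
  refine HasDerivAt.fun_sum fun k _ => HasDerivAt.fun_sum fun l _ => ?_
  have hmonomial := (hasDerivAt_pow (k + l) (1 : ℝ)).const_mul ((-1 : ℝ) ^ k)
  have hfactor := ((hasDerivAt_pow (a₃ + 1) (1 : ℝ)).const_mul (P ^ (a₁ + a₂ - l))).const_sub
    (P ^ (2 * k + l))
  refine (hmonomial.mul hfactor).congr_deriv ?_
  simp only [one_pow, mul_one]
  push_cast
  ring

theorem hasDerivAt_gFun_one {P : ℝ} {a₁ a₂ : ℕ} (a₃ : ℕ) (h12 : a₁ ≤ a₂) :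
    HasDerivAt (GFun P a₁ a₂ a₃)
      ((1 + P⁻¹) * (1 - (P ^ 2)⁻¹) * (1 + (P ^ 3)⁻¹) / 2 *
        ∑ k ∈ Finset.range (a₁ + 1), ∑ l ∈ Finset.range (a₁ + a₂ - 2 * k + 1),
          (-1 : ℝ) ^ k *
            (((k : ℝ) + l) * P ^ (2 * k + l) - ((k : ℝ) + l + a₃ + 1) * P ^ (a₁ + a₂ - l))) 1 := by
  have hF : DifferentiableAt ℝ
      (fun X : ℝ => (1 + X / P ^ 3) * (1 - X / P ^ 2) * (1 + X / P) / (1 + X)) 1 :=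
    DifferentiableAt.div (by fun_prop) (by fun_prop) (by norm_num)
  refine (hF.hasDerivAt_mul_of_eq_zero (hasDerivAt_sigFun_one P a₁ a₂ a₃)
    (sigFun_one a₃ h12)).congr_deriv ?_
  simp only [div_eq_mul_inv]
  ring

theorem deriv_of_density_rational_function_general (p : ℕ)
    (a₁ a₂ a₃ : ℕ) (h12 : a₁ ≤ a₂) :
    SigFun (p : ℝ) a₁ a₂ a₃ 1 = 0 ∧
    DifferentiableAt ℝ (GFun (p : ℝ) a₁ a₂ a₃) 1 ∧
    -(deriv (GFun (p : ℝ) a₁ a₂ a₃) 1) =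
      (1 + (p : ℝ) ^ (-1 : ℤ)) * (1 - (p : ℝ) ^ (-2 : ℤ)) * (1 + (p : ℝ) ^ (-3 : ℤ)) *
        (-(1 / 2) * ∑ k ∈ Finset.range (a₁ + 1), ∑ l ∈ Finset.range (a₁ + a₂ - 2 * k + 1),
          (-1 : ℝ) ^ k *
            (((k : ℝ) + l) * (p : ℝ) ^ (2 * k + l) -
              ((k : ℝ) + l + a₃ + 1) * (p : ℝ) ^ (a₁ + a₂ - l))) := by
  have hG := hasDerivAt_gFun_one (P := (p : ℝ)) a₃ h12
  refine ⟨sigFun_one a₃ h12, hG.differentiableAt, ?_⟩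
  rw [hG.deriv, zpow_neg, zpow_neg, zpow_neg, zpow_one, zpow_ofNat, zpow_ofNat]
  ring

/-- `Σ(1) = 0`, `G` is differentiable at `X = 1`, and `−G′(1)` equals
`(1+p^{−1})(1−p^{−2})(1+p^{−3})·(−(1/2)·∑∑ …)`. -/
theorem deriv_of_density_rational_function (p : ℕ) (hp : p.Prime) (hodd : Odd p)
    (a₁ a₂ a₃ : ℕ) (h12 : a₁ ≤ a₂) (h23 : a₂ ≤ a₃) :
    SigFun (p : ℝ) a₁ a₂ a₃ 1 = 0 ∧
    DifferentiableAt ℝ (GFun (p : ℝ) a₁ a₂ a₃) 1 ∧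
    -(deriv (GFun (p : ℝ) a₁ a₂ a₃) 1) =
      (1 + (p : ℝ) ^ (-1 : ℤ)) * (1 - (p : ℝ) ^ (-2 : ℤ)) * (1 + (p : ℝ) ^ (-3 : ℤ)) *
        (-(1 / 2) * ∑ k ∈ Finset.range (a₁ + 1), ∑ l ∈ Finset.range (a₁ + a₂ - 2 * k + 1),
          (-1 : ℝ) ^ k *
            (((k : ℝ) + l) * (p : ℝ) ^ (2 * k + l) -
              ((k : ℝ) + l + a₃ + 1) * (p : ℝ) ^ (a₁ + a₂ - l))) :=
  deriv_of_density_rational_function_general p a₁ a₂ a₃ h12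
end
end

section
/- Let p be an odd prime, n ≥ 2 an integer, and 0 ≤ a_1 ≤ … ≤ a_n integers; put Σ = a_1+…+a_n and Σ⁻ = a_1+…+a_{n−1}. Work in the field ℚ(X) of rational functions over ℚ. For a nonzero c ∈ ℚ, let τ_c denote the ℚ-algebra endomorphism of ℚ(X) with τ_c(X) = cX, and ι_c the ℚ-algebra endomorphism with ι_c(X) = cX^{−1}. Set t_m(X) = ∏_{i=0}^{m−1} (1 − (−p)^i X)^{−1}, H(X) = (1−X)(1+pX), and A(X) = (1−(−p)^{n−1}X)·(1−(−p)^{−n}X^{−1})·(−p)^{Σ⁻}·(−1)^{(n+1)a_n}·(p^n X)^{a_n+2}. Suppose F, F⁻, F⁺ ∈ ℚ(X) satisfy: (i) F⁺ = p^{2n}X²·F + H(X)·τ_{p²}(F⁻); (ii) F·t_n(X) = ((−1)^{n+1}p^n X)^{Σ}·ι_{p^{−2n}}(F)·ι_{p^{−2n}}(t_n(X)); (iii) F⁻·t_{n−1}(X) = ((−1)^{n}p^{n−1}X)^{Σ⁻}·ι_{p^{−2(n−1)}}(F⁻)·ι_{p^{−2(n−1)}}(t_{n−1}(X)); (iv)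 F⁺·t_n(X) = ((−1)^{n+1}p^n X)^{Σ⁻+a_n+2}·ι_{p^{−2n}}(F⁺)·ι_{p^{−2n}}(t_n(X)). Then (1 − p^{2n}X²)·F = H(X)·τ_{p²}(F⁻) − A(X)·F⁻ in ℚ(X). -/
/-!
Apply `ι` to the recursion (i): since `ι ∘ τ = ι'`, this expresses `ι F⁺` through `ι F` and
`ι' F⁻`, and inserting it into (iv) splits `F⁺ t_n` into two terms. By (ii), and because
`((−1)^{n+1} p^n X)² · p^{2n} · ι(X)² = 1`, the first one is `F t_n`. By (iii), the second one is
`A F⁻ t_n`: writing `t_m(Y)⁻¹ = ∏_{i<m} (1 − (−p)^i Y)`, the factor `ι H` together with the shift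
`Y ↦ p² Y` turns `ι' (t_{n−1})⁻¹` into `ι (t_n)⁻¹` up to the factor `1 − (−p)^n ι(X)`, which is
one of the two linear factors of `A`. Hence `F⁺ = F + A F⁻`, and (i) gives the claim.
-/

noncomputable section

open RatFunc

namespace RatFunc

theorem ringHom_ext_rat {L : Type*} [Semiring L] {f g : RatFunc ℚ →+* L} (h : f X = g X) :
    f = g :=
  IsLocalization.ringHom_ext (nonZeroDivisors (Polynomial ℚ)) <| Polynomial.ringHom_ext
    (fun c => RingHom.congr_fun (RingHom.ext_rat ((f.comp (algebraMap _ _)).comp Polynomial.C)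
      ((g.comp (algebraMap _ _)).comp Polynomial.C)) c) (by simpa)

theorem map_C_rat {F : Type*} [FunLike F (RatFunc ℚ) (RatFunc ℚ)]
    [RingHomClass F (RatFunc ℚ) (RatFunc ℚ)] (f : F) (c : ℚ) : f (C c) = C c := by
  rw [eq_ratCast C, map_ratCast]

end RatFunc

section tInv

variable {R : Type*} [CommRing R]

/-- `tInv x Y m` is `t_m(Y)⁻¹`, with `x` in the role of `p`. -/
def tInv (x Y : R) (m : ℕ) : R := ∏ i ∈ Finset.range m, (1 - (-x) ^ i * Y)

theorem tInv_succ (x Y : R) (m : ℕ) : tInv x Y (m + 1) = tInv x Y m * (1 - (-x) ^ m * Y) :=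
  Finset.prod_range_succ _ _

theorem tInv_two (x Y : R) : tInv x Y 2 = (1 - Y) * (1 + x * Y) := by
  simp [tInv, Finset.prod_range_succ]

theorem tInv_two_mul_tInv_sq_mul (x Y : R) (m : ℕ) :
    tInv x Y 2 * tInv x (x ^ 2 * Y) m = tInv x Y (m + 1) * (1 - (-x) ^ (m + 1) * Y) := by
  rw [← tInv_succ]
  simp only [tInv, Finset.prod_range_succ' _ (m + 1), Finset.prod_range_succ' _ m]
  simp only [Finset.prod_range_succ, Finset.range_one, Finset.prod_singleton, pow_zero, one_mul,
    pow_one, neg_mul, sub_neg_eq_add, pow_two, mul_assoc, pow_add, mul_neg, neg_neg, zero_add]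
  ring

theorem map_tInv {S F : Type*} [CommRing S] [FunLike F R S] [RingHomClass F R S] (f : F)
    (x Y : R) (m : ℕ) : f (tInv x Y m) = tInv (f x) (f Y) m := by
  simp [tInv, map_prod]

end tInv

theorem tInv_C_X_ne_zero {K : Type*} [Field K] (c : K) (m : ℕ) : tInv (C c) X m ≠ 0 := by
  have hpoly : tInv (Polynomial.C c) Polynomial.X m ≠ 0 := fun h => by
    simpa [Polynomial.eval_prod, tInv] using congrArg (Polynomial.eval 0) h
  simpa [map_tInv] using algebraMap_ne_zero hpoly

theorem map_tInv_C_X {F : Type*} [FunLike F (RatFunc ℚ) (RatFunc ℚ)]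
    [RingHomClass F (RatFunc ℚ) (RatFunc ℚ)] (f : F) (c : ℚ) (m : ℕ) :
    f (tInv (C c) X m) = tInv (C c) (f X) m := by
  rw [map_tInv, map_C_rat]

theorem tInv_C_map_X_ne_zero {F : Type*} [FunLike F (RatFunc ℚ) (RatFunc ℚ)]
    [RingHomClass F (RatFunc ℚ) (RatFunc ℚ)] (f : F) (c : ℚ) (m : ℕ) : tInv (C c) (f X) m ≠ 0 :=
  map_tInv_C_X f c m ▸ (map_ne_zero f).mpr (tInv_C_X_ne_zero _ m)

theorem prod_inv_one_sub_eq_inv_tInv {K : Type*} [Field K] (c : K) (m : ℕ) :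
    ∏ i ∈ Finset.range m, (1 - C ((-c) ^ i) * X)⁻¹ = (tInv (C c) X m)⁻¹ := by
  simp [tInv, Finset.prod_inv_distrib]

theorem eq_add_mul_of_functional_equations {K : Type*} [Field K]
    {F Fm Fp G Gm Gp u u' v v' E E' c h A : K} {S Sm : ℕ}
    (hu : u ≠ 0) (hu' : u' ≠ 0) (hv : v ≠ 0) (hv' : v' ≠ 0) (hE' : E' ≠ 0)
    (hGp : Gp = c * G + h * Gm)
    (hfeF : F * u⁻¹ = E ^ S * G * v⁻¹)
    (hfeFm : Fm * u'⁻¹ = E' ^ Sm * Gm * v'⁻¹)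
    (hfeFp : Fp * u⁻¹ = E ^ (S + 2) * Gp * v⁻¹)
    (hc : E ^ 2 * c = 1)
    (hA : E ^ (S + 2) * h * v' * u = A * E' ^ Sm * v * u') :
    Fp = F + A * Fm := by
  field_simp at hfeF hfeFm hfeFp
  have hzero : (Fp - (F + A * Fm)) * (v * E' ^ Sm * u') = 0 := by
    linear_combination (E' ^ Sm * u') * hfeFp + (E ^ (S + 2) * u * E' ^ Sm * u') * hGp
      - (E' ^ Sm * u') * hfeF + (E ^ S * G * u * E' ^ Sm * u') * hc
      - (E ^ (S + 2) * h * u) * hfeFm + Fm * hA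
  simpa [sub_eq_zero, hv, hE', hu'] using hzero

theorem zpow_two_mul_zpow_neg_two_mul_succ {G : Type*} [GroupWithZero G] {p : G} (hp : p ≠ 0)
    (m : ℕ) : p ^ 2 * p ^ (-(2 * ((m + 1 : ℕ) : ℤ))) = p ^ (-(2 * (m : ℤ))) := by
  rw [← zpow_natCast, ← zpow_add₀ hp]
  push_cast
  ring_nf

section feFactor

variable (p : ℚ)

def feFactor (n : ℕ) : RatFunc ℚ := C ((-1) ^ (n + 1) * p ^ n) * X

theorem feFactor_succ (m : ℕ) : feFactor p (m + 1) = -C p * feFactor p m := by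
  simp only [feFactor, map_mul, map_pow, map_neg, map_one]
  ring

theorem feFactor_ne_zero (hp : p ≠ 0) (n : ℕ) : feFactor p n ≠ 0 :=
  mul_ne_zero (by simp [hp]) X_ne_zero

variable {p}

theorem feFactor_sq_mul (hp : p ≠ 0) (n : ℕ) :
    feFactor p n ^ 2 * (C (p ^ (2 * n)) * (C (p ^ (-(2 * n : ℤ))) * X⁻¹) ^ 2) = 1 := by
  have hX : (X : RatFunc ℚ) ≠ 0 := X_ne_zero
  have hC : C p ≠ 0 := by simpa using hp
  simp only [feFactor, map_mul, map_pow, map_inv₀, map_neg, map_one, zpow_neg, zpow_mul,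
    zpow_ofNat, zpow_natCast]
  rcases neg_one_pow_eq_or (RatFunc ℚ) (n + 1) with h | h <;> rw [h] <;> field_simp <;> ring

theorem A_eq_feFactor_form (hp : p ≠ 0) (m Sm an : ℕ) :
    (1 - C ((-p) ^ m) * X) * (1 - C ((-p) ^ (-((m + 1 : ℕ) : ℤ))) * X⁻¹) * C ((-p) ^ Sm) *
        C ((-1) ^ ((m + 1 + 1) * an)) * (C (p ^ (m + 1)) * X) ^ (an + 2) =
      (-C p) ^ Sm * feFactor p (m + 1) ^ (an + 2) *
        (1 - (-C p) ^ (m + 1) * (C (p ^ (-(2 * ((m + 1 : ℕ) : ℤ)))) * X⁻¹)) *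
        (1 - (-C p) ^ m * X) := by
  have hX : (X : RatFunc ℚ) ≠ 0 := X_ne_zero
  have hC : C p ≠ 0 := by simpa using hp
  simp only [feFactor, map_mul, map_pow, map_inv₀, map_neg, map_one, zpow_neg, zpow_mul,
    zpow_ofNat, zpow_natCast, neg_pow (C p), pow_mul, mul_pow]
  rcases neg_one_pow_eq_or (RatFunc ℚ) m with h | h <;> simp only [pow_succ, h] <;>
    field_simp <;> ring

end feFactor

theorem tInv_multiplier_identity {R : Type*} [CommRing R] {x X Y E E' : R} (m Sm an : ℕ)
    (hE : E = -x * E') :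
    E ^ (Sm + an + 2) * tInv x Y 2 * tInv x (x ^ 2 * Y) m * tInv x X (m + 1) =
      (-x) ^ Sm * E ^ (an + 2) * (1 - (-x) ^ (m + 1) * Y) * (1 - (-x) ^ m * X) * E' ^ Sm *
        tInv x Y (m + 1) * tInv x X m := by
  rw [mul_assoc _ (tInv x Y 2), tInv_two_mul_tInv_sq_mul, tInv_succ x X, hE]
  ring

/-- in `ℚ(X)`, given the density recursion (i) and Ikeda's functional
equations (ii)–(iv) for `F`, `F⁻`, `F⁺`, one has
`(1 − p^{2n}X²)·F = H(X)·τ_{p²}(F⁻) − A(X)·F⁻`. -/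
theorem functional_equation_recursion (p : ℕ) (hp : p.Prime)
    (n : ℕ) (hn : 2 ≤ n) (a : Fin n → ℕ)
    (an Sm S : ℕ) (han : an = a ⟨n - 1, by omega⟩)
    (hSm : Sm = ∑ i : Fin (n - 1), a (Fin.castLE (Nat.sub_le n 1) i))
    (hS : S = ∑ i, a i)
    -- the substitution endomorphisms τ_{p²}, ι_{p^{-2n}}, ι_{p^{-2(n-1)}} of ℚ(X)
    (τ ι ι' : RatFunc ℚ →ₐ[ℚ] RatFunc ℚ)
    (hτ : τ RatFunc.X = RatFunc.C ((p : ℚ) ^ 2) * RatFunc.X)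
    (hι : ι RatFunc.X = RatFunc.C ((p : ℚ) ^ (-(2 * n : ℤ))) * RatFunc.X⁻¹)
    (hι' : ι' RatFunc.X = RatFunc.C ((p : ℚ) ^ (-(2 * (n - 1 : ℕ) : ℤ))) * RatFunc.X⁻¹)
    -- the auxiliary rational functions t_m, H, A
    (t : ℕ → RatFunc ℚ)
    (ht : ∀ m : ℕ, t m = ∏ i ∈ Finset.range m,
      (1 - RatFunc.C ((-(p : ℚ)) ^ i) * RatFunc.X)⁻¹)
    (H A : RatFunc ℚ)
    (hH : H = (1 - RatFunc.X) * (1 + RatFunc.C (p : ℚ) * RatFunc.X))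
    (hA : A = (1 - RatFunc.C ((-(p : ℚ)) ^ (n - 1)) * RatFunc.X) *
        (1 - RatFunc.C ((-(p : ℚ)) ^ (-(n : ℤ))) * RatFunc.X⁻¹) *
        RatFunc.C ((-(p : ℚ)) ^ Sm) * RatFunc.C ((-1 : ℚ) ^ ((n + 1) * an)) *
        (RatFunc.C ((p : ℚ) ^ n) * RatFunc.X) ^ (an + 2))
    (F Fm Fp : RatFunc ℚ)
    -- (i) the recursion relating F⁺, F and F⁻
    (hrec : Fp = RatFunc.C ((p : ℚ) ^ (2 * n)) * RatFunc.X ^ 2 * F + H * τ Fm)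
    -- (ii)–(iv) Ikeda's functional equations
    (hfeF : F * t n =
      (RatFunc.C ((-1 : ℚ) ^ (n + 1) * (p : ℚ) ^ n) * RatFunc.X) ^ S * ι F * ι (t n))
    (hfeFm : Fm * t (n - 1) =
      (RatFunc.C ((-1 : ℚ) ^ n * (p : ℚ) ^ (n - 1)) * RatFunc.X) ^ Sm * ι' Fm * ι' (t (n - 1)))
    (hfeFp : Fp * t n =
      (RatFunc.C ((-1 : ℚ) ^ (n + 1) * (p : ℚ) ^ n) * RatFunc.X) ^ (Sm + an + 2) *
        ι Fp * ι (t n)) :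
    (1 - RatFunc.C ((p : ℚ) ^ (2 * n)) * RatFunc.X ^ 2) * F = H * τ Fm - A * Fm := by
  obtain ⟨m, rfl⟩ : ∃ m, n = m + 1 := ⟨n - 1, by omega⟩
  simp only [Nat.add_sub_cancel] at hι' hfeFm hA
  have hp0 : (p : ℚ) ≠ 0 := by exact_mod_cast hp.ne_zero
  have hSsplit : S = Sm + an := by
    rw [hS, hSm, han, Fin.sum_univ_castSucc (n := m)]
    rfl
  have hιτ (f : RatFunc ℚ) : ι (τ f) = ι' f := by
    refine RingHom.congr_fun (ringHom_ext_rat (f := (ι.comp τ).toRingHom) (g := ι'.toRingHom) ?_) f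
    change ι (τ X) = ι' X
    rw [hτ, map_mul, map_C_rat, hι, hι', ← mul_assoc, ← map_mul,
      zpow_two_mul_zpow_neg_two_mul_succ hp0]
  have hιFp : ι Fp = C ((p : ℚ) ^ (2 * (m + 1))) * ι X ^ 2 * ι F +
      tInv (C (p : ℚ)) (ι X) 2 * ι' Fm := by
    rw [hrec, hH, ← tInv_two, ← map_tInv_C_X]
    simp only [map_add, map_mul, map_pow, map_C_rat, hιτ]
  have hA' : feFactor p (m + 1) ^ (Sm + an + 2) * tInv (C (p : ℚ)) (ι X) 2 *
      tInv (C (p : ℚ)) (ι' X) m * tInv (C (p : ℚ)) X (m + 1) =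
      A * feFactor p m ^ Sm * tInv (C (p : ℚ)) (ι X) (m + 1) * tInv (C (p : ℚ)) X m := by
    rw [hA, A_eq_feFactor_form hp0, ← hι, ← hιτ, hτ, map_mul, map_C_rat, map_pow]
    exact tInv_multiplier_identity m Sm an (feFactor_succ _ _)
  simp only [ht, prod_inv_one_sub_eq_inv_tInv, map_inv₀, map_tInv_C_X] at hfeF hfeFm hfeFp
  have hkey : Fp = F + A * Fm :=
    eq_add_mul_of_functional_equations (tInv_C_X_ne_zero _ _) (tInv_C_X_ne_zero _ _)
      (tInv_C_map_X_ne_zero ι _ _) (tInv_C_map_X_ne_zero ι' _ _) (feFactor_ne_zero _ hp0 m)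
      hιFp hfeF hfeFm (hSsplit ▸ hfeFp) (hι ▸ feFactor_sq_mul hp0 (m + 1)) (hSsplit ▸ hA')
  linear_combination hrec - hkey
end
end
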